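/- Fix reals χ and γ with 0 < γ < χ. There exists a constant C_γ > 0 such that for every μ* ∈ ℝ, every d > 0 and all positive integers K ≤ n, if X_1, X_2, … are i.i.d. N(μ*, 1) random variables with sample means X̄_t = t^{−1}Σ_{i=1}^t X_i, then P( there exists an integer t ≥ 1 with X̄_t + √(2χ·log(n/K)/t) ≤ μ* − d ) ≤ C_γ·d^{−1}·(K/n)^γ. -/

import Mathlib

open MeasureTheory ProbabilityTheory Real
open scoped ENNReal NNReal

lemma gaussPDF_mul_exp (m c x : ℝ) :
    gaussianPDFReal m 1 x * Real.exp (c * x)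
      = Real.exp (c * m + c ^ 2 / 2) * gaussianPDFReal (m + c) 1 x := by
  simp only [gaussianPDFReal, NNReal.coe_one, mul_one]
  rw [mul_comm (Real.exp (c * m + c ^ 2 / 2)), mul_assoc, mul_assoc, ← Real.exp_add,
    ← Real.exp_add]
  congr 1
  ring

lemma integrable_exp_gaussianReal (m c : ℝ) :
    Integrable (fun x => Real.exp (c * x)) (gaussianReal m 1) := by
  rw [gaussianReal_of_var_ne_zero m one_ne_zero]
  rw [integrable_withDensity_iff_integrable_smul' (measurable_gaussianPDF m 1)
    (ae_of_all _ fun x => ENNReal.ofReal_lt_top)]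
  have : (fun x => (gaussianPDF m 1 x).toReal • Real.exp (c * x))
      = fun x => Real.exp (c * m + c ^ 2 / 2) * gaussianPDFReal (m + c) 1 x := by
    ext x
    rw [smul_eq_mul, gaussianPDF, ENNReal.toReal_ofReal (gaussianPDFReal_nonneg _ _ _),
      gaussPDF_mul_exp]
  rw [this]
  exact (integrable_gaussianPDFReal (m + c) 1).const_mul _

lemma integral_exp_gaussianReal (m c : ℝ) :
    ∫ x, Real.exp (c * x) ∂(gaussianReal m 1) = Real.exp (c * m + c ^ 2 / 2) := by
  rw [gaussianReal_of_var_ne_zero m one_ne_zero]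
  have h1 : gaussianPDF m 1 = fun x => ((fun y => (gaussianPDFReal m 1 y).toNNReal) x : ℝ≥0∞) := by
    ext x; rfl
  rw [h1, integral_withDensity_eq_integral_smul (by
    exact (measurable_gaussianPDFReal m 1).real_toNNReal)]
  have : ∀ x : ℝ, (gaussianPDFReal m 1 x).toNNReal • Real.exp (c * x)
      = Real.exp (c * m + c ^ 2 / 2) * gaussianPDFReal (m + c) 1 x := by
    intro x
    rw [NNReal.smul_def, smul_eq_mul, Real.coe_toNNReal _ (gaussianPDFReal_nonneg _ _ _),
      gaussPDF_mul_exp]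
  simp_rw [this]
  rw [integral_const_mul, integral_gaussianPDFReal_eq_one _ one_ne_zero, mul_one]

section walk
variable {Ω : Type} [MeasurableSpace Ω] {P : Measure Ω}
  {X : ℕ → Ω → ℝ} {μs : ℝ}

lemma exp_Y_integrable (hX : ∀ i, Measurable (X i))
    (hmap : ∀ i, Measure.map (X i) P = gaussianReal μs 1) (l : ℝ) (i : ℕ) :
    Integrable (fun ω => Real.exp (l * (μs - X i ω))) P := by
  have hmeas : Measurable (fun x : ℝ => Real.exp (-l * x)) := by fun_prop
  have h := integrable_exp_gaussianReal μs (-l)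
  rw [← hmap i, integrable_map_measure hmeas.aestronglyMeasurable (hX i).aemeasurable] at h
  have h2 := h.const_mul (Real.exp (l * μs))
  have : ∀ ω, Real.exp (l * μs) * ((fun x => Real.exp (-l * x)) ∘ X i) ω
      = Real.exp (l * (μs - X i ω)) := by
    intro ω
    simp only [Function.comp_apply, ← Real.exp_add]
    ring_nf
  simpa only [this] using h2

lemma mgf_Y (hX : ∀ i, Measurable (X i))
    (hmap : ∀ i, Measure.map (X i) P = gaussianReal μs 1) (l : ℝ) (i : ℕ) :
    mgf (fun ω => μs - X i ω) P l = Real.exp (l ^ 2 / 2) := by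
  rw [mgf]
  have : ∀ ω, Real.exp (l * (μs - X i ω))
      = Real.exp (l * μs) * Real.exp (-l * (X i ω)) := by
    intro ω
    rw [← Real.exp_add]
    ring_nf
  simp_rw [this]
  have hmeas : Measurable (fun x : ℝ => Real.exp (-l * x)) := by fun_prop
  have hmi := integral_map (μ := P) (f := fun x => Real.exp (-l * x)) (hX i).aemeasurable
    hmeas.aestronglyMeasurable
  rw [hmap i, integral_exp_gaussianReal] at hmi
  rw [integral_const_mul, ← hmi, ← Real.exp_add]
  ring_nf

lemma exp_sum_Y_integrable (hX : ∀ i, Measurable (X i))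
    (hindep : iIndepFun X P)
    (hmap : ∀ i, Measure.map (X i) P = gaussianReal μs 1) (l : ℝ) (s : Finset ℕ) :
    Integrable (fun ω => Real.exp (l * ∑ i ∈ s, (μs - X i ω))) P := by
  haveI : IsProbabilityMeasure P := hindep.isProbabilityMeasure
  have hYind : iIndepFun (fun i ω => μs - X i ω) P :=
    hindep.comp (fun _ x => μs - x) (fun _ => measurable_const.sub measurable_id)
  have h := iIndepFun.integrable_exp_mul_sum (t := l) hYind
    (fun i => measurable_const.sub (hX i))
    (s := s) (fun i _ => exp_Y_integrable hX hmap l i)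
  have : ∀ ω, Real.exp (l * (∑ i ∈ s, fun ω => μs - X i ω) ω)
      = Real.exp (l * ∑ i ∈ s, (μs - X i ω)) := by
    intro ω
    simp [Finset.sum_apply]
  simpa only [this] using h

lemma integral_exp_sum_Y (hX : ∀ i, Measurable (X i))
    (hindep : iIndepFun X P)
    (hmap : ∀ i, Measure.map (X i) P = gaussianReal μs 1) (l : ℝ) (s : Finset ℕ) :
    ∫ ω, Real.exp (l * ∑ i ∈ s, (μs - X i ω)) ∂P
      = Real.exp (s.card * (l ^ 2 / 2)) := by
  haveI : IsProbabilityMeasure P := hindep.isProbabilityMeasure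
  have hYind : iIndepFun (fun i ω => μs - X i ω) P :=
    hindep.comp (fun _ x => μs - x) (fun _ => measurable_const.sub measurable_id)
  have h := iIndepFun.mgf_sum (t := l) hYind (fun i => measurable_const.sub (hX i)) s
  simp_rw [mgf_Y hX hmap l] at h
  rw [Finset.prod_const, ← Real.exp_nat_mul] at h
  rw [mgf] at h
  have : ∀ ω, Real.exp (l * (∑ i ∈ s, fun ω => μs - X i ω) ω)
      = Real.exp (l * ∑ i ∈ s, (μs - X i ω)) := by
    intro ω
    simp [Finset.sum_apply]
  simp_rw [this] at h
  exact h

end walk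

section maximal
variable {Ω : Type} [MeasurableSpace Ω] {P : Measure Ω} {X : ℕ → Ω → ℝ} {μs : ℝ}

lemma walk_maximal (hX : ∀ i, Measurable (X i))
    (hindep : iIndepFun X P)
    (hmap : ∀ i, Measure.map (X i) P = gaussianReal μs 1)
    (N : ℕ) (l a : ℝ) (hl : 0 ≤ l) :
    P {ω | ∃ t ≤ N, a ≤ ∑ i ∈ Finset.range t, (μs - X i ω)}
      ≤ ENNReal.ofReal (Real.exp (l ^ 2 * N / 2 - l * a)) := by
  classical
  haveI : IsProbabilityMeasure P := hindep.isProbabilityMeasure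
  set Z : ℕ → Ω → ℝ := fun t ω => ∑ i ∈ Finset.range t, (μs - X i ω) with hZdef
  have hZ : ∀ t, Measurable (Z t) := fun t =>
    Finset.measurable_sum _ (fun i _ => measurable_const.sub (hX i))
  set A : ℕ → Set Ω := fun t => {ω | (∀ s < t, Z s ω < a) ∧ a ≤ Z t ω} with hAdef
  have hAmeas : ∀ t, MeasurableSet (A t) := by
    intro t
    have hset : A t = (⋂ s ∈ Finset.range t, {ω | Z s ω < a}) ∩ {ω | a ≤ Z t ω} := by
      ext ω
      simp only [hAdef, Set.mem_setOf_eq, Set.mem_inter_iff, Set.mem_iInter, Finset.mem_range]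
    rw [hset]
    exact (MeasurableSet.biInter (Finset.range t).countable_toSet
      (fun s _ => measurableSet_lt (hZ s) measurable_const)).inter
      (measurableSet_le measurable_const (hZ t))
  have hne : ∀ {t u : ℕ} {ω : Ω}, ω ∈ A t → ω ∈ A u → t ≠ u → False := by
    intro t u ω ht hu htu
    rcases Nat.lt_or_ge t u with h | h
    · exact absurd ht.2 (not_le.2 (hu.1 t h))
    · exact absurd hu.2 (not_le.2 (ht.1 u (lt_of_le_of_ne h (Ne.symm htu))))
  have hcover : {ω | ∃ t ≤ N, a ≤ Z t ω} ⊆ ⋃ t ∈ Finset.range (N + 1), A t := by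
    rintro ω ⟨t, htN, hta⟩
    have hex : ∃ u, a ≤ Z u ω := ⟨t, hta⟩
    have h1 : Nat.find hex ∈ Finset.range (N + 1) := by
      rw [Finset.mem_range, Nat.lt_succ_iff]
      exact le_trans (Nat.find_min' hex hta) htN
    exact Set.mem_biUnion h1
      ⟨fun s hs => not_le.1 (Nat.find_min hex hs), Nat.find_spec hex⟩
  set G : Ω → ℝ≥0∞ := fun ω => ENNReal.ofReal (Real.exp (l * Z N ω)) with hGdef
  have hGmeas : Measurable G := (((hZ N).const_mul l).exp).ennreal_ofReal
  have hGint : ∫⁻ ω, G ω ∂P = ENNReal.ofReal (Real.exp (N * (l ^ 2 / 2))) := by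
    have h2 := integral_exp_sum_Y hX hindep hmap l (Finset.range N)
    rw [Finset.card_range] at h2
    show ∫⁻ ω, ENNReal.ofReal (Real.exp (l * ∑ i ∈ Finset.range N, (μs - X i ω))) ∂P = _
    rw [← ofReal_integral_eq_lintegral_ofReal
      (exp_sum_Y_integrable hX hindep hmap l (Finset.range N))
      (ae_of_all _ fun ω => (Real.exp_pos _).le), h2]
  have key : ∀ t ∈ Finset.range (N + 1),
      ENNReal.ofReal (Real.exp (l * a)) * P (A t) ≤ ∫⁻ ω in A t, G ω ∂P := by
    intro t ht
    have htN : t ≤ N := Nat.lt_succ_iff.1 (Finset.mem_range.1 ht)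
    set f : Ω → ℝ≥0∞ :=
      (A t).indicator (fun ω => ENNReal.ofReal (Real.exp (l * Z t ω))) with hfdef
    set g : Ω → ℝ≥0∞ :=
      fun ω => ENNReal.ofReal (Real.exp (l * ∑ i ∈ Finset.Ico t N, (μs - X i ω))) with hgdef
    have hfmeas : Measurable f :=
      ((((hZ t).const_mul l).exp).ennreal_ofReal).indicator (hAmeas t)
    have hgmeas : Measurable g :=
      (((Finset.measurable_sum _ (fun i _ => measurable_const.sub (hX i))).const_mul l).exp).ennreal_ofReal
    have hsumIco : ∀ ω : Ω, Z t ω + ∑ i ∈ Finset.Ico t N, (μs - X i ω) = Z N ω := by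
      intro ω
      show (∑ i ∈ Finset.range t, (μs - X i ω)) + ∑ i ∈ Finset.Ico t N, (μs - X i ω)
        = ∑ i ∈ Finset.range N, (μs - X i ω)
      rw [Finset.range_eq_Ico, Finset.sum_Ico_consecutive _ (Nat.zero_le t) htN,
        ← Finset.range_eq_Ico]
    have hfg_mul : ∀ ω, f ω * g ω = (A t).indicator G ω := by
      intro ω
      by_cases hω : ω ∈ A t
      · simp only [hfdef, hgdef, hGdef, Set.indicator_of_mem hω]
        rw [← ENNReal.ofReal_mul (Real.exp_pos _).le, ← Real.exp_add, ← mul_add, hsumIco ω]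
      · simp [hfdef, Set.indicator_of_notMem hω]
    -- independence of f and g
    have hdisjST : Disjoint (Finset.range t) (Finset.Ico t N) := by
      rw [Finset.disjoint_left]
      intro i hi hi2
      rw [Finset.mem_range] at hi
      rw [Finset.mem_Ico] at hi2
      omega
    have base := hindep.indepFun_finset (Finset.range t) (Finset.Ico t N) hdisjST hX
    set σf : ℕ → ({x // x ∈ Finset.range t} → ℝ) → ℝ :=
      fun s v => ∑ i ∈ Finset.univ.filter (fun i : {x // x ∈ Finset.range t} => (i : ℕ) < s),
        (μs - v i) with hσdef
    have hσmeas : ∀ s, Measurable (σf s) := fun s =>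
      Finset.measurable_sum _ (fun i _ => measurable_const.sub (measurable_pi_apply i))
    have hσ : ∀ s, s ≤ t → ∀ ω : Ω, σf s (fun i => X i ω) = Z s ω := by
      intro s hs ω
      rw [hσdef]
      simp only
      rw [Finset.sum_filter]
      rw [Finset.sum_coe_sort (Finset.range t) (fun i => if i < s then μs - X i ω else 0)]
      rw [← Finset.sum_filter]
      congr 1
      ext i
      simp only [Finset.mem_filter, Finset.mem_range]
      omega
    set φ : ({x // x ∈ Finset.range t} → ℝ) → ℝ≥0∞ :=
      fun v => Set.indicator {v | (∀ s < t, σf s v < a) ∧ a ≤ σf t v}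
        (fun v => ENNReal.ofReal (Real.exp (l * σf t v))) v with hφdef
    have hφmeas : Measurable φ := by
      refine Measurable.indicator ((((hσmeas t).const_mul l).exp).ennreal_ofReal) ?_
      have hset : {v : {x // x ∈ Finset.range t} → ℝ | (∀ s < t, σf s v < a) ∧ a ≤ σf t v}
          = (⋂ s ∈ Finset.range t, {v | σf s v < a}) ∩ {v | a ≤ σf t v} := by
        ext v
        simp only [Set.mem_setOf_eq, Set.mem_inter_iff, Set.mem_iInter, Finset.mem_range]
      rw [hset]
      exact (MeasurableSet.biInter (Finset.range t).countable_toSet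
        (fun s _ => measurableSet_lt (hσmeas s) measurable_const)).inter
        (measurableSet_le measurable_const (hσmeas t))
    set ψ : ({x // x ∈ Finset.Ico t N} → ℝ) → ℝ≥0∞ :=
      fun v => ENNReal.ofReal (Real.exp (l * ∑ i ∈ Finset.univ,
        (μs - v i))) with hψdef
    have hψmeas : Measurable ψ :=
      (((Finset.measurable_sum _ (fun i _ => measurable_const.sub (measurable_pi_apply i))).const_mul
        l).exp).ennreal_ofReal
    have hcomp := base.comp hφmeas hψmeas
    have hφeq : (φ ∘ fun ω (i : {x // x ∈ Finset.range t}) => X i ω) = f := by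
      funext ω
      simp only [Function.comp_apply, hφdef, hfdef]
      by_cases hω : ω ∈ A t
      · rw [Set.indicator_of_mem hω, Set.indicator_of_mem, hσ t le_rfl ω]
        refine ⟨fun s hs => ?_, ?_⟩
        · rw [hσ s hs.le ω]; exact hω.1 s hs
        · rw [hσ t le_rfl ω]; exact hω.2
      · rw [Set.indicator_of_notMem hω, Set.indicator_of_notMem]
        intro hmem
        refine hω ⟨fun s hs => ?_, ?_⟩
        · have := hmem.1 s hs; rwa [hσ s hs.le ω] at this
        · have := hmem.2; rwa [hσ t le_rfl ω] at this
    have hψeq : (ψ ∘ fun ω (i : {x // x ∈ Finset.Ico t N}) => X i ω) = g := by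
      funext ω
      simp only [Function.comp_apply, hψdef, hgdef]
      rw [show (∑ i : {x // x ∈ Finset.Ico t N}, (μs - X (↑i) ω))
        = ∑ i ∈ Finset.Ico t N, (μs - X i ω)
        from Finset.sum_coe_sort (Finset.Ico t N) (fun i => μs - X i ω)]
    rw [hφeq, hψeq] at hcomp
    -- integral of g
    have hgint : ∫⁻ ω, g ω ∂P = ENNReal.ofReal (Real.exp ((N - t : ℕ) * (l ^ 2 / 2))) := by
      show ∫⁻ ω, ENNReal.ofReal (Real.exp (l * ∑ i ∈ Finset.Ico t N, (μs - X i ω))) ∂P = _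
      rw [← ofReal_integral_eq_lintegral_ofReal
        (exp_sum_Y_integrable hX hindep hmap l (Finset.Ico t N))
        (ae_of_all _ fun ω => (Real.exp_pos _).le)]
      congr 1
      rw [integral_exp_sum_Y hX hindep hmap l (Finset.Ico t N), Nat.card_Ico]
    have hgone : 1 ≤ ∫⁻ ω, g ω ∂P := by
      rw [hgint]
      rw [← ENNReal.ofReal_one]
      exact ENNReal.ofReal_le_ofReal (Real.one_le_exp (by positivity))
    calc ENNReal.ofReal (Real.exp (l * a)) * P (A t)
        ≤ ∫⁻ ω in A t, ENNReal.ofReal (Real.exp (l * Z t ω)) ∂P := by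
          rw [← setLIntegral_const (A t)]
          refine setLIntegral_mono (((hZ t).const_mul l).exp).ennreal_ofReal ?_
          intro ω hω
          exact ENNReal.ofReal_le_ofReal
            (Real.exp_le_exp.2 (mul_le_mul_of_nonneg_left hω.2 hl))
      _ = ∫⁻ ω, f ω ∂P := by rw [hfdef, lintegral_indicator (hAmeas t)]
      _ ≤ (∫⁻ ω, f ω ∂P) * ∫⁻ ω, g ω ∂P := le_mul_of_one_le_right zero_le hgone
      _ = ∫⁻ ω, f ω * g ω ∂P :=
          (lintegral_mul_eq_lintegral_mul_lintegral_of_indepFun hfmeas hgmeas hcomp).symm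
      _ = ∫⁻ ω, (A t).indicator G ω ∂P := by simp_rw [hfg_mul]
      _ = ∫⁻ ω in A t, G ω ∂P := lintegral_indicator (hAmeas t) _
  -- assemble
  have hstep : ENNReal.ofReal (Real.exp (l * a)) * P {ω | ∃ t ≤ N, a ≤ Z t ω}
      ≤ ENNReal.ofReal (Real.exp (N * (l ^ 2 / 2))) := by
    calc ENNReal.ofReal (Real.exp (l * a)) * P {ω | ∃ t ≤ N, a ≤ Z t ω}
        ≤ ENNReal.ofReal (Real.exp (l * a)) * ∑ t ∈ Finset.range (N + 1), P (A t) := by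
          refine mul_le_mul_right ((measure_mono hcover).trans ?_) _
          exact measure_biUnion_finset_le _ _
      _ = ∑ t ∈ Finset.range (N + 1), ENNReal.ofReal (Real.exp (l * a)) * P (A t) := by
          rw [Finset.mul_sum]
      _ ≤ ∑ t ∈ Finset.range (N + 1), ∫⁻ ω in A t, G ω ∂P := Finset.sum_le_sum key
      _ = ∑ t ∈ Finset.range (N + 1), ∫⁻ ω, (A t).indicator G ω ∂P := by
          refine Finset.sum_congr rfl (fun t _ => ?_)
          rw [lintegral_indicator (hAmeas t)]
      _ = ∫⁻ ω, ∑ t ∈ Finset.range (N + 1), (A t).indicator G ω ∂P := by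
          rw [lintegral_finset_sum _ (fun t _ => hGmeas.indicator (hAmeas t))]
      _ ≤ ∫⁻ ω, G ω ∂P := by
          refine lintegral_mono (fun ω => ?_)
          by_cases hω : ∃ t ∈ Finset.range (N + 1), ω ∈ A t
          · obtain ⟨t₀, ht₀, hmem⟩ := hω
            rw [Finset.sum_eq_single_of_mem t₀ ht₀
              (fun b _ hbne => Set.indicator_of_notMem
                (fun hmemb => hne hmemb hmem hbne) _)]
            rw [Set.indicator_of_mem hmem]
          · push_neg at hω
            rw [Finset.sum_eq_zero (fun t ht => Set.indicator_of_notMem (hω t ht) _)]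
            exact zero_le
      _ = ENNReal.ofReal (Real.exp (N * (l ^ 2 / 2))) := hGint
  have hpos : ENNReal.ofReal (Real.exp (l * a)) ≠ 0 := by
    simp [ENNReal.ofReal_eq_zero, not_le, Real.exp_pos]
  have hfin : ENNReal.ofReal (Real.exp (l * a)) ≠ ⊤ := ENNReal.ofReal_ne_top
  rw [mul_comm] at hstep
  have := (ENNReal.le_div_iff_mul_le (Or.inl hpos) (Or.inl hfin)).2 hstep
  refine this.trans ?_
  rw [← ENNReal.ofReal_div_of_pos (Real.exp_pos _), ← Real.exp_sub]
  refine ENNReal.ofReal_le_ofReal (Real.exp_le_exp.2 (le_of_eq ?_))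
  ring

end maximal


lemma exp_neg_le_inv_sqrt {x : ℝ} (hx : 0 < x) : Real.exp (-x) ≤ (Real.sqrt x)⁻¹ := by
  have h1 : Real.sqrt x ≤ Real.exp x := by
    rcases le_or_gt x 1 with h | h
    · calc Real.sqrt x ≤ Real.sqrt 1 := Real.sqrt_le_sqrt h
        _ = 1 := Real.sqrt_one
        _ ≤ Real.exp x := by linarith [Real.one_le_exp hx.le]
    · calc Real.sqrt x ≤ Real.sqrt (x ^ 2) := Real.sqrt_le_sqrt (by nlinarith)
        _ = x := Real.sqrt_sq (by linarith)
        _ ≤ Real.exp x := by linarith [Real.add_one_le_exp x]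
  rw [Real.exp_neg]
  exact inv_anti₀ (Real.sqrt_pos.2 hx) h1

set_option maxHeartbeats 1000000 in
theorem stmt_15 (χ γ : ℝ) (hγ0 : 0 < γ) (hγχ : γ < χ) :
    ∃ Cγ : ℝ, 0 < Cγ ∧
      ∀ (μs d : ℝ), 0 < d → ∀ (K n : ℕ), 0 < K → K ≤ n →
      ∀ (Ω : Type) (_ : MeasurableSpace Ω) (P : Measure Ω), IsProbabilityMeasure P →
      ∀ X : ℕ → Ω → ℝ, (∀ i, Measurable (X i)) →
        iIndepFun X P →
        (∀ i, Measure.map (X i) P = gaussianReal μs 1) →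
        P {ω | ∃ t : ℕ, 1 ≤ t ∧
            (∑ i ∈ Finset.range t, X i ω) / t
              + Real.sqrt (2 * χ * Real.log (n / (K : ℝ)) / t) ≤ μs - d}
          ≤ ENNReal.ofReal (Cγ * d⁻¹ * ((K : ℝ) / n) ^ γ) := by
  classical
  have hχ0 : 0 < χ := hγ0.trans hγχ
  set η : ℝ := χ / γ with hηdef
  have hη1 : 1 < η := (one_lt_div hγ0).2 hγχ
  have hη0 : 0 < η := lt_trans one_pos hη1
  set s : ℝ := Real.sqrt η with hsdef
  have hs1 : 1 < s := by
    rw [hsdef, show (1:ℝ) = Real.sqrt 1 by rw [Real.sqrt_one]]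
    exact Real.sqrt_lt_sqrt (by norm_num) hη1
  have hs0 : 0 < s := lt_trans one_pos hs1
  have hrinv : s⁻¹ < 1 := inv_lt_one_of_one_lt₀ hs1
  have hrinv0 : 0 ≤ s⁻¹ := inv_nonneg.2 hs0.le
  refine ⟨Real.sqrt (2 * η) * (1 - s⁻¹)⁻¹, ?_, ?_⟩
  · have h1 : 0 < Real.sqrt (2 * η) := Real.sqrt_pos.2 (by positivity)
    have h2 : 0 < (1 - s⁻¹)⁻¹ := by rw [inv_pos]; linarith
    exact mul_pos h1 h2
  intro μs d hd K n hK hKn Ω mΩ P hP X hX hindep hmap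
  haveI := hP
  have hn : 0 < n := lt_of_lt_of_le hK hKn
  have hK0 : (0:ℝ) < K := by exact_mod_cast hK
  have hn0 : (0:ℝ) < n := by exact_mod_cast hn
  set L : ℝ := Real.log ((n:ℝ) / K) with hLdef
  have hL : 0 ≤ L := Real.log_nonneg (by
    rw [le_div_iff₀ hK0, one_mul]
    exact_mod_cast hKn)
  set T : ℕ → ℕ := fun k => ⌈η ^ k⌉₊ with hTdef
  have hTlb : ∀ k, η ^ k ≤ (T k : ℝ) := fun k => Nat.le_ceil _
  have hT1 : ∀ k, 1 ≤ T k := fun k => Nat.one_le_ceil_iff.2 (pow_pos hη0 k)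
  have hTub : ∀ k, ((T (k + 1) - 1 : ℕ) : ℝ) ≤ η ^ (k + 1) := by
    intro k
    rw [Nat.cast_sub (hT1 (k + 1))]
    have h := Nat.ceil_lt_add_one (le_of_lt (pow_pos hη0 (k + 1)))
    push_cast
    linarith
  set b : ℕ → ℝ := fun k => η ^ k * d + Real.sqrt (2 * χ * L * η ^ k) with hbdef
  have hb0 : ∀ k, 0 ≤ b k := fun k => add_nonneg (by positivity) (Real.sqrt_nonneg _)
  set B : ℕ → Set Ω := fun k =>
    {ω | ∃ t ≤ T (k + 1) - 1, b k ≤ ∑ i ∈ Finset.range t, (μs - X i ω)} with hBdef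
  have hsub : {ω | ∃ t : ℕ, 1 ≤ t ∧
      (∑ i ∈ Finset.range t, X i ω) / t
        + Real.sqrt (2 * χ * Real.log (n / (K : ℝ)) / t) ≤ μs - d}
      ⊆ ⋃ k : ℕ, B k := by
    rintro ω ⟨t, ht1, hineq⟩
    have ht0 : (0:ℝ) < t := by exact_mod_cast ht1
    have htne : (t:ℝ) ≠ 0 := ne_of_gt ht0
    have hZsum : ∑ i ∈ Finset.range t, (μs - X i ω)
        = (t:ℝ) * μs - ∑ i ∈ Finset.range t, X i ω := by
      rw [Finset.sum_sub_distrib, Finset.sum_const, Finset.card_range, nsmul_eq_mul]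
    have hsqrt : (t:ℝ) * Real.sqrt (2 * χ * L / t) = Real.sqrt (2 * χ * L * t) := by
      rw [show 2 * χ * L * (t:ℝ) = (2 * χ * L / t) * (t:ℝ) ^ 2 by field_simp]
      rw [Real.sqrt_mul (by positivity) ((t:ℝ) ^ 2), Real.sqrt_sq ht0.le]
      ring
    have hkey : (t:ℝ) * d + Real.sqrt (2 * χ * L * t)
        ≤ ∑ i ∈ Finset.range t, (μs - X i ω) := by
      have h2 := mul_le_mul_of_nonneg_left hineq ht0.le
      rw [mul_add, mul_div_cancel₀ _ htne] at h2
      rw [hZsum, ← hsqrt]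
      nlinarith
    have hPex : ∃ k, t < T k := by
      obtain ⟨k, hk⟩ := pow_unbounded_of_one_lt (t:ℝ) hη1
      exact ⟨k, by exact_mod_cast lt_of_lt_of_le hk (hTlb k)⟩
    set m := Nat.find hPex with hmdef
    have hmspec : t < T m := Nat.find_spec hPex
    have hm0 : m ≠ 0 := by
      intro h0
      rw [h0] at hmspec
      have hT0 : T 0 = 1 := by rw [hTdef]; simp
      omega
    set k := m - 1 with hkdef
    have hkm : k < m := Nat.sub_lt (Nat.pos_of_ne_zero hm0) one_pos
    have hTk_le : T k ≤ t := not_lt.1 (Nat.find_min hPex hkm)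
    have hTk1 : t < T (k + 1) := by
      have hsucc : k + 1 = m := Nat.succ_pred_eq_of_pos (Nat.pos_of_ne_zero hm0)
      rw [hsucc]; exact hmspec
    refine Set.mem_iUnion.2 ⟨k, t, Nat.le_sub_one_of_lt hTk1, ?_⟩
    have hηk_le : η ^ k ≤ (t:ℝ) := le_trans (hTlb k) (by exact_mod_cast hTk_le)
    have h1 : η ^ k * d ≤ (t:ℝ) * d := mul_le_mul_of_nonneg_right hηk_le hd.le
    have h2 : Real.sqrt (2 * χ * L * η ^ k) ≤ Real.sqrt (2 * χ * L * t) :=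
      Real.sqrt_le_sqrt (mul_le_mul_of_nonneg_left hηk_le (by positivity))
    calc b k = η ^ k * d + Real.sqrt (2 * χ * L * η ^ k) := by rw [hbdef]
      _ ≤ (t:ℝ) * d + Real.sqrt (2 * χ * L * t) := add_le_add h1 h2
      _ ≤ _ := hkey
  refine le_trans (measure_mono hsub) (le_trans (measure_iUnion_le B) ?_)
  have hPB : ∀ k : ℕ, P (B k) ≤ ENNReal.ofReal
      ((Real.exp (-(γ * L)) * (Real.sqrt (2 * η) * d⁻¹)) * (s⁻¹) ^ k) := by
    intro k
    set l : ℝ := b k / η ^ (k + 1) with hldef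
    have hE : (0:ℝ) < η ^ (k + 1) := pow_pos hη0 _
    have hl0 : 0 ≤ l := div_nonneg (hb0 k) hE.le
    have h := walk_maximal hX hindep hmap (T (k + 1) - 1) l (b k) hl0
    refine le_trans h (ENNReal.ofReal_le_ofReal ?_)
    have hexp1 : l ^ 2 * ((T (k + 1) - 1 : ℕ) : ℝ) / 2 - l * b k
        ≤ -(γ * L) - η ^ k * d ^ 2 / (2 * η) := by
      have hNle := hTub k
      have step1 : l ^ 2 * ((T (k + 1) - 1 : ℕ) : ℝ) / 2 - l * b k
          ≤ l ^ 2 * η ^ (k + 1) / 2 - l * b k := by nlinarith [sq_nonneg l]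
      have step2 : l ^ 2 * η ^ (k + 1) / 2 - l * b k = -((b k) ^ 2 / (2 * η ^ (k + 1))) := by
        rw [hldef]
        field_simp
        ring
      have hbsq : (η ^ k * d) ^ 2 + 2 * χ * L * η ^ k ≤ (b k) ^ 2 := by
        have hbk : b k = η ^ k * d + Real.sqrt (2 * χ * L * η ^ k) := rfl
        rw [hbk]
        have hq := Real.sq_sqrt (show (0:ℝ) ≤ 2 * χ * L * η ^ k by positivity)
        nlinarith [Real.sqrt_nonneg (2 * χ * L * η ^ k),
          mul_nonneg (mul_nonneg (pow_pos hη0 k).le hd.le)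
            (Real.sqrt_nonneg (2 * χ * L * η ^ k))]
      have hgam : χ / η = γ := by
        rw [hηdef]
        field_simp
      have step3 : ((η ^ k * d) ^ 2 + 2 * χ * L * η ^ k) / (2 * η ^ (k + 1))
          = γ * L + η ^ k * d ^ 2 / (2 * η) := by
        rw [← hgam, pow_succ]
        have hηk : (0:ℝ) < η ^ k := pow_pos hη0 k
        field_simp
        ring
      have step4 : ((η ^ k * d) ^ 2 + 2 * χ * L * η ^ k) / (2 * η ^ (k + 1))
          ≤ (b k) ^ 2 / (2 * η ^ (k + 1)) := by gcongr
      linarith [step1, step2.le, step2.ge, step4, step3.le, step3.ge]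
    calc Real.exp (l ^ 2 * ((T (k + 1) - 1 : ℕ) : ℝ) / 2 - l * b k)
        ≤ Real.exp (-(γ * L) - η ^ k * d ^ 2 / (2 * η)) := Real.exp_le_exp.2 hexp1
      _ = Real.exp (-(γ * L)) * Real.exp (-(η ^ k * d ^ 2 / (2 * η))) := by
          rw [← Real.exp_add]
          ring_nf
      _ ≤ Real.exp (-(γ * L)) * (Real.sqrt (2 * η) * d⁻¹ * (s⁻¹) ^ k) := by
          refine mul_le_mul_of_nonneg_left ?_ (Real.exp_pos _).le
          have hx : (0:ℝ) < η ^ k * d ^ 2 / (2 * η) := by positivity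
          refine le_trans (exp_neg_le_inv_sqrt hx) ?_
          have hsk : (s ^ k) ^ 2 = η ^ k := by
            rw [hsdef, ← pow_mul, mul_comm k 2, pow_mul, Real.sq_sqrt hη0.le]
          have hxeq : η ^ k * d ^ 2 / (2 * η) = (s ^ k * d) ^ 2 / (2 * η) := by
            rw [mul_pow, hsk]
          rw [hxeq, Real.sqrt_div (sq_nonneg _), Real.sqrt_sq (by positivity), inv_div]
          apply le_of_eq
          rw [inv_pow]
          have hskpos : (0:ℝ) < s ^ k := pow_pos hs0 k
          field_simp
      _ = (Real.exp (-(γ * L)) * (Real.sqrt (2 * η) * d⁻¹)) * (s⁻¹) ^ k := by ring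
  have hD0 : 0 ≤ Real.exp (-(γ * L)) * (Real.sqrt (2 * η) * d⁻¹) := by positivity
  calc (∑' k, P (B k))
      ≤ ∑' k, ENNReal.ofReal
          ((Real.exp (-(γ * L)) * (Real.sqrt (2 * η) * d⁻¹)) * (s⁻¹) ^ k) :=
        ENNReal.tsum_le_tsum hPB
    _ = ∑' k, ENNReal.ofReal (Real.exp (-(γ * L)) * (Real.sqrt (2 * η) * d⁻¹))
          * (ENNReal.ofReal s⁻¹) ^ k := by
        refine tsum_congr (fun k => ?_)
        rw [ENNReal.ofReal_mul hD0, ENNReal.ofReal_pow hrinv0]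
    _ = ENNReal.ofReal (Real.exp (-(γ * L)) * (Real.sqrt (2 * η) * d⁻¹))
          * (1 - ENNReal.ofReal s⁻¹)⁻¹ := by
        rw [ENNReal.tsum_mul_left, ENNReal.tsum_geometric]
    _ = ENNReal.ofReal ((Real.exp (-(γ * L)) * (Real.sqrt (2 * η) * d⁻¹)) * (1 - s⁻¹)⁻¹) := by
        rw [ENNReal.ofReal_mul hD0]
        congr 1
        rw [← ENNReal.ofReal_one, ← ENNReal.ofReal_sub 1 hrinv0,
          ENNReal.ofReal_inv_of_pos (by linarith)]
    _ = ENNReal.ofReal (Real.sqrt (2 * η) * (1 - s⁻¹)⁻¹ * d⁻¹ * ((K:ℝ) / n) ^ γ) := by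
        congr 1
        have hrp : ((K:ℝ) / n) ^ γ = Real.exp (-(γ * L)) := by
          rw [Real.rpow_def_of_pos (by positivity)]
          have h1 : Real.log ((K:ℝ) / n) = -L := by
            rw [hLdef, Real.log_div (ne_of_gt hK0) (ne_of_gt hn0),
              Real.log_div (ne_of_gt hn0) (ne_of_gt hK0)]
            ring
          rw [h1]
          congr 1
          ring
        rw [hrp]
        ring
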